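/- arXiv:2604.08392 — 4 statements merged into one kernel-verified Lean document; each statement's English description precedes it below -/
import Mathlib

section
/- Let n, m, T be positive integers, A ∈ ℝ^{n×n}, B ∈ ℝ^{n×m}, and let X₋ ∈ ℝ^{n×T}, U ∈ ℝ^{m×T}, X₊ ∈ ℝ^{n×T} satisfy X₊ = A·X₋ + B·U. Let δ ∈ ℝ be arbitrary, define X̃₊ = X₊ + δ·X₋, and suppose G ∈ ℝ^{T×n} satisfies X₋·G = Iₙ and every eigenvalue of X̃₊·G over ℂ has modulus strictly less than 1. Then every eigenvalue of A + B·(U·G) over ℂ has modulus strictly greater than |δ| − 1. -/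
open Matrix

namespace Matrix

section DataIdentity

variable {R : Type*} [CommRing R] {n m T : Type*} [Fintype n] [DecidableEq n] [Fintype m]
  [Fintype T]

lemma add_smul_mul_eq_smul_one_add_of_data {A : Matrix n n R} {B : Matrix n m R}
    {Xm Xp : Matrix n T R} {U : Matrix m T R} {G : Matrix T n R}
    (hdata : Xp = A * Xm + B * U) (hG : Xm * G = 1) (δ : R) :
    (Xp + δ • Xm) * G = δ • 1 + (A + B * (U * G)) := by
  rw [hdata, Matrix.add_mul, Matrix.add_mul, Matrix.smul_mul, hG, Matrix.mul_assoc,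
    Matrix.mul_assoc, hG, Matrix.mul_one, add_comm]

end DataIdentity

variable {ι : Type*} [Fintype ι] [DecidableEq ι]

lemma map_ofReal_smul_one_add (c : ℝ) (M : Matrix ι ι ℝ) :
    (c • (1 : Matrix ι ι ℝ) + M).map Complex.ofReal =
      algebraMap ℂ (Matrix ι ι ℂ) c + M.map Complex.ofReal := by
  ext i j
  by_cases h : i = j <;> simp [h, algebraMap_matrix_apply]

lemma ofReal_add_mem_spectrum_map_smul_one_add {c : ℝ} {M : Matrix ι ι ℝ} {μ : ℂ}
    (hμ : μ ∈ spectrum ℂ (M.map Complex.ofReal)) :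
    (c : ℂ) + μ ∈ spectrum ℂ ((c • (1 : Matrix ι ι ℝ) + M).map Complex.ofReal) := by
  rwa [map_ofReal_smul_one_add, add_comm (c : ℂ), spectrum.add_mem_add_iff]

end Matrix

theorem stmt_2_general {n m T : ℕ}
    (A : Matrix (Fin n) (Fin n) ℝ) (B : Matrix (Fin n) (Fin m) ℝ)
    (Xm Xp : Matrix (Fin n) (Fin T) ℝ) (U : Matrix (Fin m) (Fin T) ℝ)
    (hdata : Xp = A * Xm + B * U)
    (δ : ℝ)
    (Xp_tilde : Matrix (Fin n) (Fin T) ℝ)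
    (hpoison : Xp_tilde = Xp + δ • Xm)
    (G : Matrix (Fin T) (Fin n) ℝ)
    (hG : Xm * G = 1)
    (happarent : ∀ μ ∈ spectrum ℂ ((Xp_tilde * G).map Complex.ofReal), ‖μ‖ < 1) :
    ∀ μ ∈ spectrum ℂ ((A + B * (U * G)).map Complex.ofReal), |δ| - 1 < ‖μ‖ := by
  intro μ hμ
  have hshift : (δ : ℂ) + μ ∈ spectrum ℂ ((Xp_tilde * G).map Complex.ofReal) := by
    rw [hpoison, add_smul_mul_eq_smul_one_add_of_data hdata hG]
    exact ofReal_add_mem_spectrum_map_smul_one_add hμ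
  have htriangle := norm_le_add_norm_add (δ : ℂ) μ
  rw [Complex.norm_real, Real.norm_eq_abs] at htriangle
  linarith [happarent _ hshift]

theorem stmt_2 {n m T : ℕ} (hn : 0 < n) (hm : 0 < m) (hT : 0 < T)
    (A : Matrix (Fin n) (Fin n) ℝ) (B : Matrix (Fin n) (Fin m) ℝ)
    (Xm Xp : Matrix (Fin n) (Fin T) ℝ) (U : Matrix (Fin m) (Fin T) ℝ)
    (hdata : Xp = A * Xm + B * U)
    (δ : ℝ)
    (Xp_tilde : Matrix (Fin n) (Fin T) ℝ)
    (hpoison : Xp_tilde = Xp + δ • Xm)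
    (G : Matrix (Fin T) (Fin n) ℝ)
    (hG : Xm * G = 1)
    (happarent : ∀ μ ∈ spectrum ℂ ((Xp_tilde * G).map Complex.ofReal), ‖μ‖ < 1) :
    ∀ μ ∈ spectrum ℂ ((A + B * (U * G)).map Complex.ofReal), |δ| - 1 < ‖μ‖ :=
  stmt_2_general A B Xm Xp U hdata δ Xp_tilde hpoison G hG happarent
end

section
/- Let n, m be positive integers, T a positive integer, A ∈ ℝ^{n×n}, B ∈ ℝ^{n×m}, δ ∈ ℝ. Let u(0), …, u(T−1) ∈ ℝ^m and x(0), …, x(T) ∈ ℝ^n satisfy x(k+1) = A·x(k) + B·u(k) for all 0 ≤ k ≤ T−1. Let X₋, U, X₊ be the matrices whose k-th columns (for 0 ≤ k ≤ T−1) are x(k), u(k), x(k+1) respectively. Suppose Δ(0) = 0 and that for each 0 ≤ k ≤ T−1 there exists g(k) ∈ ℝ^T with X₋·g(k) = Δ(k), U·g(k) = 0, and Δ(k+1) = X₊·g(k) + δ·(x(k) + Δ(k)). Then the poisoned trajectory defined by x̃(k) = x(k) + Δ(k) satisfies x̃(0) = x(0) and x̃(k+1) = (A + δ·I)·x̃(k)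 + B·u(k) for all 0 ≤ k ≤ T−1. -/
/-!
The perturbations `Δ k` are built so that the poisoned trajectory still looks like data of the
true system plus the shift `δ • x̃ k`. The recorded data satisfy `X₊ = A X₋ + B U`, so the
combination `g k`, which reproduces `Δ k` from `X₋` and is invisible to `U`, is mapped by `X₊`
to `A (Δ k)`. Hence `Δ (k + 1) = A (Δ k) + δ x̃ k`, and adding the true dynamics
`x (k + 1) = A (x k) + B (u k)` gives `x̃ (k + 1) = (A + δ I) x̃ k + B (u k)`.
-/

open Matrix

variable {R ι κ : Type*} [Semiring R] [Fintype ι] [Fintype κ]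

def dataMatrix (T : ℕ) (v : ℕ → ι → R) : Matrix ι (Fin T) R :=
  Matrix.of fun i k => v k i

theorem dataMatrix_succ_eq {T : ℕ} {A : Matrix ι ι R} {B : Matrix ι κ R}
    {x : ℕ → ι → R} {u : ℕ → κ → R}
    (hdyn : ∀ k < T, x (k + 1) = A *ᵥ x k + B *ᵥ u k) :
    dataMatrix T (fun k => x (k + 1)) = A * dataMatrix T x + B * dataMatrix T u := by
  ext i k
  simp only [dataMatrix, of_apply, Matrix.add_apply, Matrix.mul_apply, hdyn k k.isLt, Pi.add_apply,
    mulVec, dotProduct]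

theorem mulVec_eq_of_eq_mul_add_mul {τ : Type*} [Fintype τ] {A : Matrix ι ι R}
    {B : Matrix ι κ R} {Xm Xp : Matrix ι τ R} {U : Matrix κ τ R} {g : τ → R} {d : ι → R}
    (hXp : Xp = A * Xm + B * U) (hXm : Xm *ᵥ g = d) (hU : U *ᵥ g = 0) :
    Xp *ᵥ g = A *ᵥ d := by
  rw [hXp, add_mulVec, ← mulVec_mulVec, ← mulVec_mulVec, hXm, hU, mulVec_zero, add_zero]

theorem stmt_5_general {n m T : ℕ}
    (A : Matrix (Fin n) (Fin n) ℝ) (B : Matrix (Fin n) (Fin m) ℝ) (δ : ℝ)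
    (u : ℕ → (Fin m → ℝ)) (x : ℕ → (Fin n → ℝ))
    (hdyn : ∀ k < T, x (k + 1) = A.mulVec (x k) + B.mulVec (u k))
    (Xm : Matrix (Fin n) (Fin T) ℝ) (U : Matrix (Fin m) (Fin T) ℝ)
    (Xp : Matrix (Fin n) (Fin T) ℝ)
    (hXm : Xm = Matrix.of fun i (k : Fin T) => x k i)
    (hU : U = Matrix.of fun i (k : Fin T) => u k i)
    (hXp : Xp = Matrix.of fun i (k : Fin T) => x (k + 1) i)
    (Δ : ℕ → (Fin n → ℝ))
    (hΔ0 : Δ 0 = 0)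
    (hrec : ∀ k < T, ∃ g : Fin T → ℝ,
      Xm.mulVec g = Δ k ∧ U.mulVec g = 0 ∧
      Δ (k + 1) = Xp.mulVec g + δ • (x k + Δ k))
    (xt : ℕ → (Fin n → ℝ))
    (hxt : ∀ k, xt k = x k + Δ k) :
    xt 0 = x 0 ∧
      ∀ k < T, xt (k + 1) =
        (A + δ • (1 : Matrix (Fin n) (Fin n) ℝ)).mulVec (xt k) + B.mulVec (u k) := by
  have hfac : Xp = A * Xm + B * U := by
    subst hXm hU hXp
    exact dataMatrix_succ_eq hdyn
  refine ⟨by rw [hxt, hΔ0, add_zero], fun k hk => ?_⟩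
  obtain ⟨g, hXg, hUg, hΔ⟩ := hrec k hk
  rw [hxt, hxt k, hΔ, mulVec_eq_of_eq_mul_add_mul hfac hXg hUg, hdyn k hk,
    add_mulVec, smul_mulVec, one_mulVec, mulVec_add]
  abel

theorem stmt_5 {n m T : ℕ} (hn : 0 < n) (hm : 0 < m) (hT : 0 < T)
    (A : Matrix (Fin n) (Fin n) ℝ) (B : Matrix (Fin n) (Fin m) ℝ) (δ : ℝ)
    (u : ℕ → (Fin m → ℝ)) (x : ℕ → (Fin n → ℝ))
    (hdyn : ∀ k < T, x (k + 1) = A.mulVec (x k) + B.mulVec (u k))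
    (Xm : Matrix (Fin n) (Fin T) ℝ) (U : Matrix (Fin m) (Fin T) ℝ)
    (Xp : Matrix (Fin n) (Fin T) ℝ)
    (hXm : Xm = Matrix.of fun i (k : Fin T) => x k i)
    (hU : U = Matrix.of fun i (k : Fin T) => u k i)
    (hXp : Xp = Matrix.of fun i (k : Fin T) => x (k + 1) i)
    (Δ : ℕ → (Fin n → ℝ))
    (hΔ0 : Δ 0 = 0)
    (hrec : ∀ k < T, ∃ g : Fin T → ℝ,
      Xm.mulVec g = Δ k ∧ U.mulVec g = 0 ∧
      Δ (k + 1) = Xp.mulVec g + δ • (x k + Δ k))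
    (xt : ℕ → (Fin n → ℝ))
    (hxt : ∀ k, xt k = x k + Δ k) :
    xt 0 = x 0 ∧
      ∀ k < T, xt (k + 1) =
        (A + δ • (1 : Matrix (Fin n) (Fin n) ℝ)).mulVec (xt k) + B.mulVec (u k) :=
  stmt_5_general A B δ u x hdyn Xm U Xp hXm hU hXp Δ hΔ0 hrec xt hxt
end

section
/- Let n, m be positive integers, T a positive integer, A ∈ ℝ^{n×n}, B ∈ ℝ^{n×m}, and δ ∈ ℝ with |δ| ≥ 2. Let u(0), …, u(T−1) ∈ ℝ^m and x(0), …, x(T) ∈ ℝ^n satisfy x(k+1) = A·x(k) + B·u(k) for all 0 ≤ k ≤ T−1, and let X₋, U, X₊ be the matrices whose k-th columns (0 ≤ k ≤ T−1) are x(k), u(k), x(k+1) respectively. Suppose Δ(0) = 0 and for each 0 ≤ k ≤ T−1 there exists g(k) ∈ ℝ^T with X₋·g(k) = Δ(k), U·g(k) = 0, and Δ(k+1) = X₊·g(k) + δ·(x(k) + Δ(k)). Define x̃(k) = x(k) + Δ(k) and let X̃₋, X̃₊ be the n×T matrices whose k-th columns are x̃(k), x̃(k+1) respectively. If G̃ ∈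 ℝ^{T×n} satisfies X̃₋·G̃ = Iₙ and the apparent closed-loop matrix X̃₊·G̃ is Schur stable, then every eigenvalue of the true closed-loop matrix A + B·(U·G̃) over ℂ has modulus strictly greater than 1; in particular, A + B·(U·G̃) is not Schur stable. -/
open Matrix

/-- A real square matrix is Schur stable if every eigenvalue over ℂ has modulus < 1. -/
def SchurStable {n : ℕ} (M : Matrix (Fin n) (Fin n) ℝ) : Prop :=
  ∀ μ ∈ spectrum ℂ (M.map Complex.ofReal), ‖μ‖ < 1

/-!
Since each poisoning shift Δ(k) is written as X₋ g with U g = 0, the clean data give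
X₊ g = A Δ(k), so the poisoned states obey x̃(k+1) = (A + δI) x̃(k) + B u(k). Hence
X̃₊ G̃ = δI + (A + B U G̃): the apparent closed loop is the true one shifted by δ, and a shift
by |δ| ≥ 2 can only move the spectrum into the unit disk if it started outside it.
-/

section DataMatrix

variable {R : Type*} [CommSemiring R] {ι κ ν : Type*} [Fintype κ] [Fintype ν] {T : ℕ}

theorem of_eq_mul_of_add_mul_of (A : Matrix ι κ R) (B : Matrix ι ν R)
    {x : ℕ → κ → R} {u : ℕ → ν → R} {y : ℕ → ι → R}
    (h : ∀ k < T, y k = A *ᵥ x k + B *ᵥ u k) :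
    (of fun i (k : Fin T) => y k i) =
      A * of (fun i (k : Fin T) => x k i) + B * of (fun i (k : Fin T) => u k i) := by
  ext i k
  simp [h k k.isLt, mul_apply, mulVec, dotProduct]

end DataMatrix

section Poisoning

variable {R : Type*} [CommRing R] {ι κ ν : Type*} [Fintype ι] [Fintype κ] [Fintype ν]
  [DecidableEq ι]

theorem poisoned_state_succ {A : Matrix ι ι R} {B : Matrix ι ν R} {Xm Xp : Matrix ι κ R}
    {U : Matrix ν κ R} (hXp : Xp = A * Xm + B * U) (δ : R) {x x' d d' : ι → R} {u : ν → R}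
    (hx' : x' = A *ᵥ x + B *ᵥ u) {g : κ → R} (hXm : Xm *ᵥ g = d) (hU : U *ᵥ g = 0)
    (hd' : d' = Xp *ᵥ g + δ • (x + d)) :
    x' + d' = (A + algebraMap R (Matrix ι ι R) δ) *ᵥ (x + d) + B *ᵥ u := by
  have hXpg : Xp *ᵥ g = A *ᵥ d := by
    rw [hXp, add_mulVec, ← mulVec_mulVec, ← mulVec_mulVec, hXm, hU, mulVec_zero, add_zero]
  rw [hx', hd', hXpg, add_mulVec, Algebra.algebraMap_eq_smul_one, smul_mulVec, one_mulVec,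
    mulVec_add]
  abel

theorem mul_eq_add_of_mul_eq_one {A : Matrix ι ι R} {B : Matrix ι ν R} {Xm Xp : Matrix ι κ R}
    {U : Matrix ν κ R} {G : Matrix κ ι R} (hXp : Xp = A * Xm + B * U) (hG : Xm * G = 1) :
    Xp * G = A + B * (U * G) := by
  rw [hXp, Matrix.add_mul, Matrix.mul_assoc, hG, Matrix.mul_one, Matrix.mul_assoc]

end Poisoning

theorem map_algebraMap_add_ofReal {n : Type*} [Fintype n] [DecidableEq n] (c : ℝ)
    (M : Matrix n n ℝ) :
    (algebraMap ℝ (Matrix n n ℝ) c + M).map Complex.ofReal =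
      algebraMap ℂ (Matrix n n ℂ) c + M.map Complex.ofReal := by
  rw [Matrix.map_add _ Complex.ofReal_add, map_algebraMap _ _ Complex.ofReal_zero rfl,
    IsScalarTower.algebraMap_apply ℝ ℂ]
  rfl

theorem one_lt_norm_of_norm_add_lt_one {E : Type*} [SeminormedAddCommGroup E] {a b : E}
    (ha : 2 ≤ ‖a‖) (h : ‖a + b‖ < 1) : 1 < ‖b‖ := by
  linarith [norm_le_add_norm_add a b]

section Schur

variable {n : ℕ}

theorem SchurStable.one_lt_norm_of_algebraMap_add {c : ℝ} (hc : 2 ≤ |c|)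
    {M : Matrix (Fin n) (Fin n) ℝ} (h : SchurStable (algebraMap ℝ _ c + M)) :
    ∀ μ ∈ spectrum ℂ (M.map Complex.ofReal), 1 < ‖μ‖ := by
  intro μ hμ
  have hshift : μ + c ∈ spectrum ℂ ((algebraMap ℝ _ c + M).map Complex.ofReal) := by
    rwa [map_algebraMap_add_ofReal, spectrum.add_mem_add_iff]
  refine one_lt_norm_of_norm_add_lt_one ?_ (add_comm μ (c : ℂ) ▸ h _ hshift)
  rwa [Complex.norm_real, Real.norm_eq_abs]

theorem not_schurStable_of_one_lt_norm (hn : 0 < n) {M : Matrix (Fin n) (Fin n) ℝ}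
    (h : ∀ μ ∈ spectrum ℂ (M.map Complex.ofReal), 1 < ‖μ‖) : ¬ SchurStable M := by
  have : Nonempty (Fin n) := ⟨⟨0, hn⟩⟩
  obtain ⟨μ, hμ⟩ := spectrum.nonempty_of_isAlgClosed_of_finiteDimensional ℂ (M.map Complex.ofReal)
  exact fun hM => (h μ hμ).not_gt (hM μ hμ)

end Schur

theorem stmt_7_general {n m T : ℕ} (hn : 0 < n)
    (A : Matrix (Fin n) (Fin n) ℝ) (B : Matrix (Fin n) (Fin m) ℝ)
    (δ : ℝ) (hδ : 2 ≤ |δ|)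
    (u : ℕ → (Fin m → ℝ)) (x : ℕ → (Fin n → ℝ))
    (hdyn : ∀ k < T, x (k + 1) = A.mulVec (x k) + B.mulVec (u k))
    (Xm : Matrix (Fin n) (Fin T) ℝ) (U : Matrix (Fin m) (Fin T) ℝ)
    (Xp : Matrix (Fin n) (Fin T) ℝ)
    (hXm : Xm = Matrix.of fun i (k : Fin T) => x k i)
    (hU : U = Matrix.of fun i (k : Fin T) => u k i)
    (hXp : Xp = Matrix.of fun i (k : Fin T) => x (k + 1) i)
    (Δ : ℕ → (Fin n → ℝ))
    (hrec : ∀ k < T, ∃ g : Fin T → ℝ,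
      Xm.mulVec g = Δ k ∧ U.mulVec g = 0 ∧
      Δ (k + 1) = Xp.mulVec g + δ • (x k + Δ k))
    (xt : ℕ → (Fin n → ℝ))
    (hxt : ∀ k, xt k = x k + Δ k)
    (Xmt Xpt : Matrix (Fin n) (Fin T) ℝ)
    (hXmt : Xmt = Matrix.of fun i (k : Fin T) => xt k i)
    (hXpt : Xpt = Matrix.of fun i (k : Fin T) => xt (k + 1) i)
    (Gt : Matrix (Fin T) (Fin n) ℝ)
    (hGt : Xmt * Gt = 1)
    (happarent : SchurStable (Xpt * Gt)) :
    (∀ μ ∈ spectrum ℂ ((A + B * (U * Gt)).map Complex.ofReal), 1 < ‖μ‖) ∧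
      ¬ SchurStable (A + B * (U * Gt)) := by
  have hdata : Xp = A * Xm + B * U := by
    rw [hXp, hXm, hU]
    exact of_eq_mul_of_add_mul_of A B hdyn
  have hpoisoned : Xpt = (A + algebraMap ℝ _ δ) * Xmt + B * U := by
    rw [hXpt, hXmt, hU]
    refine of_eq_mul_of_add_mul_of (y := fun k => xt (k + 1)) _ B fun k hk => ?_
    obtain ⟨g, hXmg, hUg, hΔ⟩ := hrec k hk
    rw [hxt, hxt]
    exact poisoned_state_succ hdata δ (hdyn k hk) hXmg hUg hΔ
  have happarent_eq : Xpt * Gt = algebraMap ℝ _ δ + (A + B * (U * Gt)) := by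
    rw [mul_eq_add_of_mul_eq_one hpoisoned hGt, add_comm A, add_assoc]
  rw [happarent_eq] at happarent
  have hunstable := happarent.one_lt_norm_of_algebraMap_add hδ
  exact ⟨hunstable, not_schurStable_of_one_lt_norm hn hunstable⟩

theorem stmt_7 {n m T : ℕ} (hn : 0 < n) (hm : 0 < m) (hT : 0 < T)
    (A : Matrix (Fin n) (Fin n) ℝ) (B : Matrix (Fin n) (Fin m) ℝ)
    (δ : ℝ) (hδ : 2 ≤ |δ|)
    (u : ℕ → (Fin m → ℝ)) (x : ℕ → (Fin n → ℝ))
    (hdyn : ∀ k < T, x (k + 1) = A.mulVec (x k) + B.mulVec (u k))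
    (Xm : Matrix (Fin n) (Fin T) ℝ) (U : Matrix (Fin m) (Fin T) ℝ)
    (Xp : Matrix (Fin n) (Fin T) ℝ)
    (hXm : Xm = Matrix.of fun i (k : Fin T) => x k i)
    (hU : U = Matrix.of fun i (k : Fin T) => u k i)
    (hXp : Xp = Matrix.of fun i (k : Fin T) => x (k + 1) i)
    (Δ : ℕ → (Fin n → ℝ))
    (hΔ0 : Δ 0 = 0)
    (hrec : ∀ k < T, ∃ g : Fin T → ℝ,
      Xm.mulVec g = Δ k ∧ U.mulVec g = 0 ∧
      Δ (k + 1) = Xp.mulVec g + δ • (x k + Δ k))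
    (xt : ℕ → (Fin n → ℝ))
    (hxt : ∀ k, xt k = x k + Δ k)
    (Xmt Xpt : Matrix (Fin n) (Fin T) ℝ)
    (hXmt : Xmt = Matrix.of fun i (k : Fin T) => xt k i)
    (hXpt : Xpt = Matrix.of fun i (k : Fin T) => xt (k + 1) i)
    (Gt : Matrix (Fin T) (Fin n) ℝ)
    (hGt : Xmt * Gt = 1)
    (happarent : SchurStable (Xpt * Gt)) :
    (∀ μ ∈ spectrum ℂ ((A + B * (U * Gt)).map Complex.ofReal), 1 < ‖μ‖) ∧
      ¬ SchurStable (A + B * (U * Gt)) :=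
  stmt_7_general hn A B δ hδ u x hdyn Xm U Xp hXm hU hXp Δ hrec xt hxt Xmt Xpt hXmt hXpt Gt hGt
    happarent
end

section
/- Let n, m be positive integers, A ∈ ℝ^{n×n}, B ∈ ℝ^{n×m}, and δ ∈ ℝ with |δ| < 2. Assume the pair (A + δ·I, B) admits uniform pole placement, i.e., for every μ ∈ ℝ there exists K ∈ ℝ^{m×n} such that every eigenvalue of (A + δ·I) + B·K over ℂ equals μ. Then there exists K ∈ ℝ^{m×n} such that both the apparent closed-loop matrix (A + δ·I) + B·K and the true closed-loop matrix A + B·K are Schur stable. In particular, a poisoning shift of magnitude |δ| < 2 is not effective for destabilization. -/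
/-! Place every apparent closed-loop pole at δ/2. The true closed loop differs from the apparent one
by the shift -δ·I, so all its poles sit at -δ/2; both have modulus |δ|/2 < 1. -/

open Matrix

open scoped Pointwise

theorem Matrix.map_ofReal_add_smul_one {ι : Type*} [Fintype ι] [DecidableEq ι]
    (M : Matrix ι ι ℝ) (c : ℝ) :
    (M + c • (1 : Matrix ι ι ℝ)).map Complex.ofReal
      = M.map Complex.ofReal + algebraMap ℂ (Matrix ι ι ℂ) c := by
  ext i j
  rcases eq_or_ne i j with rfl | h <;> simp [algebraMap_matrix_apply, *]

theorem spectrum_map_ofReal_add_smul_one {ι : Type*} [Fintype ι] [DecidableEq ι]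
    (M : Matrix ι ι ℝ) (c : ℝ) :
    spectrum ℂ ((M + c • (1 : Matrix ι ι ℝ)).map Complex.ofReal)
      = spectrum ℂ (M.map Complex.ofReal) + ({(c : ℂ)} : Set ℂ) := by
  rw [Matrix.map_ofReal_add_smul_one, spectrum.add_singleton_eq]

theorem schurStable_of_forall_eigenvalue_eq {n : ℕ} {M : Matrix (Fin n) (Fin n) ℝ} {μ : ℝ}
    (hμ : |μ| < 1) (h : ∀ z ∈ spectrum ℂ (M.map Complex.ofReal), z = μ) : SchurStable M := by
  intro z hz
  rw [h z hz, Complex.norm_real, Real.norm_eq_abs]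
  exact hμ

theorem stmt_9_general {n m : ℕ}
    (A : Matrix (Fin n) (Fin n) ℝ) (B : Matrix (Fin n) (Fin m) ℝ)
    (δ : ℝ) (hδ : |δ| < 2)
    (hplace : ∀ μ : ℝ, ∃ K : Matrix (Fin m) (Fin n) ℝ,
      ∀ z ∈ spectrum ℂ
        ((A + δ • (1 : Matrix (Fin n) (Fin n) ℝ) + B * K).map Complex.ofReal),
        z = (μ : ℂ)) :
    ∃ K : Matrix (Fin m) (Fin n) ℝ,
      SchurStable (A + δ • (1 : Matrix (Fin n) (Fin n) ℝ) + B * K) ∧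
        SchurStable (A + B * K) := by
  have hhalf : |δ / 2| < 1 := by rw [abs_div, abs_two]; linarith
  obtain ⟨K, hK⟩ := hplace (δ / 2)
  refine ⟨K, schurStable_of_forall_eigenvalue_eq hhalf hK,
    schurStable_of_forall_eigenvalue_eq (μ := -(δ / 2)) (by rwa [abs_neg]) ?_⟩
  have hshift : A + δ • (1 : Matrix (Fin n) (Fin n) ℝ) + B * K + (-δ) • 1 = A + B * K := by
    rw [neg_smul]; abel
  intro z hz
  rw [← hshift, spectrum_map_ofReal_add_smul_one, Set.add_singleton] at hz
  obtain ⟨w, hw, rfl⟩ := hz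
  rw [hK w hw]
  push_cast
  ring

theorem stmt_9 {n m : ℕ} (hn : 0 < n) (hm : 0 < m)
    (A : Matrix (Fin n) (Fin n) ℝ) (B : Matrix (Fin n) (Fin m) ℝ)
    (δ : ℝ) (hδ : |δ| < 2)
    (hplace : ∀ μ : ℝ, ∃ K : Matrix (Fin m) (Fin n) ℝ,
      ∀ z ∈ spectrum ℂ
        ((A + δ • (1 : Matrix (Fin n) (Fin n) ℝ) + B * K).map Complex.ofReal),
        z = (μ : ℂ)) :
    ∃ K : Matrix (Fin m) (Fin n) ℝ,
      SchurStable (A + δ • (1 : Matrix (Fin n) (Fin n) ℝ) + B * K) ∧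
        SchurStable (A + B * K) :=
  stmt_9_general A B δ hδ hplace
end
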